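/- arXiv:2210.06460 — 4 statements merged into one kernel-verified Lean document; each statement's English description precedes it below -/
import Mathlib

section
/- Under assumptions (A0) and (A1), over the region S_{β^{l0}} containing the LTS estimator, β̂^n_lts satisfies the system of normal equations Σ_{i=1}^n (y_i - w_i'β) w_i 1(r_i(β)² ≤ r²_{h:n}(β)) = 0. -/
open MeasureTheory Finset Metric
open scoped ENNReal

noncomputable section

/-- The i-th residual `r_i(β) = y_i - w_i'β`. -/
def res {n p : ℕ} (w : Fin n → Fin p → ℝ) (y : Fin n → ℝ) (β : Fin p → ℝ) (i : Fin n) : ℝ :=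
  y i - ∑ j, w i j * β j

/-- The empirical LTS objective `O^n(β) = (1/n) ∑_{i=1}^h r²_{i:n}(β)`: the sum of the `h`
smallest squared residuals, i.e. the minimum over all size-`h` index sets of the sum of the
corresponding squared residuals. -/
def Oemp {n p : ℕ} (w : Fin n → Fin p → ℝ) (y : Fin n → ℝ) (h : ℕ) (β : Fin p → ℝ) : ℝ :=
  (1 / (n : ℝ)) *
    sInf ((fun s : Finset (Fin n) => ∑ i ∈ s, (res w y β i) ^ 2) '' {s | s.card = h})

/-- `k` enumerates the indices of the `h` smallest squared residuals at `β`,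
in increasing order. -/
def IsHSeq {n p : ℕ} (w : Fin n → Fin p → ℝ) (y : Fin n → ℝ) {h : ℕ}
    (k : Fin h → Fin n) (β : Fin p → ℝ) : Prop :=
  Function.Injective k ∧
    (∀ i j : Fin h, i ≤ j → (res w y β (k i)) ^ 2 ≤ (res w y β (k j)) ^ 2) ∧
    (∀ m : Fin n, m ∉ Set.range k → ∀ i : Fin h, (res w y β (k i)) ^ 2 ≤ (res w y β m) ^ 2)

/-- The region `S_{β^l}`: the set of `β` whose (unique) `h`-index sequence is `k`. -/
def Sreg {n p : ℕ} (w : Fin n → Fin p → ℝ) (y : Fin n → ℝ) {h : ℕ}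
    (k : Fin h → Fin n) : Set (Fin p → ℝ) :=
  {β | IsHSeq w y k β ∧ ∀ k' : Fin h → Fin n, IsHSeq w y k' β → k' = k}

/-- Assumption (A1): the design matrix `X_n` and each of its `h`-row submatrices
have full rank `p`. -/
def A1 {n p : ℕ} (w : Fin n → Fin p → ℝ) (h : ℕ) : Prop :=
  (Matrix.of w).rank = p ∧
    ∀ s : Finset (Fin n), s.card = h →
      ((Matrix.of w).submatrix (fun i : {x // x ∈ s} => (i : Fin n)) id).rank = p

/-- Assumption (A0): for every `β`, `W(β) = (y - w'β)²` has a density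
(its law is absolutely continuous w.r.t. Lebesgue measure). -/
def A0 {Ω : Type*} [MeasurableSpace Ω] (P : Measure Ω) {n p : ℕ}
    (w : Ω → Fin n → Fin p → ℝ) (y : Ω → Fin n → ℝ) : Prop :=
  ∀ (β : Fin p → ℝ) (i : Fin n),
    (P.map fun ω => (res (w ω) (y ω) β i) ^ 2) ≪ (volume : Measure ℝ)

/-- The h-th smallest squared residual `r²_{h:n}(β)`. -/
def hthSqRes {n p : ℕ} (w : Fin n → Fin p → ℝ) (y : Fin n → ℝ) (h : ℕ)
    (β : Fin p → ℝ) : ℝ :=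
  sInf {t : ℝ | h ≤ (Finset.univ.filter fun i : Fin n => (res w y β i) ^ 2 ≤ t).card}

/-!
Let `S = range k` be the index set of the `h` smallest squared residuals at the LTS estimator
`β̂`. Then `O(β̂) = (1/n) ∑_{i ∈ S} r_i(β̂)²`, while `O(β) ≤ (1/n) ∑_{i ∈ S} r_i(β)²` for every
`β`, so `β̂` minimises the least-squares objective of the subsample `S`. Its first-order
condition, obtained by perturbing one coordinate of `β̂` (a quadratic `C t² - 2 B t` that is
nonnegative for all `t` has `B = 0`), is the normal equation over `S`. Uniqueness of the index
sequence in `Sreg` forces a strict gap between the squared residuals inside and outside `S`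
(equal values could be swapped), so `S` is exactly the set of indices with `r_i² ≤ r²_{h:n}`.
-/

section OrderStatistics

variable {ι : Type*} [DecidableEq ι] (f : ι → ℝ)

theorem sum_le_sum_of_mem_iff_le {S s : Finset ι} {t : ℝ} (hS : ∀ i, i ∈ S ↔ f i ≤ t)
    (hcard : s.card = S.card) : ∑ i ∈ S, f i ≤ ∑ i ∈ s, f i := by
  have hin : ∑ i ∈ S \ s, f i ≤ (S \ s).card • t :=
    Finset.sum_le_card_nsmul _ _ _ fun i hi => (hS i).1 (Finset.mem_sdiff.1 hi).1
  have hout : (s \ S).card • t ≤ ∑ i ∈ s \ S, f i :=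
    Finset.card_nsmul_le_sum _ _ _ fun i hi =>
      le_of_not_ge fun h => (Finset.mem_sdiff.1 hi).2 ((hS i).2 h)
  rw [Finset.card_sdiff_comm hcard.symm] at hin
  rw [← Finset.sum_inter_add_sum_sdiff S s, ← Finset.sum_inter_add_sum_sdiff s S,
    Finset.inter_comm]
  linarith

theorem filter_le_sInf_card_filter_le_eq [Fintype ι] {S : Finset ι} (hne : S.Nonempty)
    (hsep : ∀ i ∈ S, ∀ m ∉ S, f i < f m) :
    univ.filter (fun i => f i ≤ sInf {t | S.card ≤ (univ.filter fun i => f i ≤ t).card}) = S := by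
  obtain ⟨a, haS, hmax⟩ := S.exists_max_image f hne
  have hfilter : univ.filter (fun i => f i ≤ f a) = S := by
    ext i
    simp only [Finset.mem_filter, Finset.mem_univ, true_and]
    exact ⟨fun hi => by_contra fun hiS => (hsep a haS i hiS).not_ge hi, hmax i⟩
  suffices hset : {t | S.card ≤ (univ.filter fun i => f i ≤ t).card} = Set.Ici (f a) by
    rw [hset, csInf_Ici, hfilter]
  ext t
  simp only [Set.mem_ofPred_eq, Set.mem_Ici]
  constructor
  · intro ht
    by_contra! hlt
    have hsub : univ.filter (fun i => f i ≤ t) ⊆ S.erase a := fun i hi => by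
      have hit : f i ≤ t := (Finset.mem_filter.1 hi).2
      exact Finset.mem_erase.2 ⟨by rintro rfl; linarith,
        hfilter ▸ Finset.mem_filter.2 ⟨Finset.mem_univ i, by linarith⟩⟩
    have := Finset.card_le_card hsub
    rw [Finset.card_erase_of_mem haS] at this
    have := hne.card_pos
    omega
  · intro ht
    rw [← hfilter]
    exact Finset.card_le_card fun i hi => Finset.mem_filter.2
      ⟨Finset.mem_univ i, (Finset.mem_filter.1 hi).2.trans ht⟩

end OrderStatistics

section LTS

variable {n p : ℕ} {w : Fin n → Fin p → ℝ} {y : Fin n → ℝ}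

theorem res_add_single (β : Fin p → ℝ) (j : Fin p) (t : ℝ) (i : Fin n) :
    res w y (β + Pi.single j t) i = res w y β i - t * w i j := by
  simp only [res, Pi.add_apply, mul_add, Finset.sum_add_distrib, Pi.single_apply, mul_ite,
    mul_zero, Finset.sum_ite_eq', Finset.mem_univ, if_true]
  ring

theorem sum_res_mul_eq_zero_of_forall_sum_sq_le {s : Finset (Fin n)} {βh : Fin p → ℝ}
    (hmin : ∀ β, ∑ i ∈ s, res w y βh i ^ 2 ≤ ∑ i ∈ s, res w y β i ^ 2) (j : Fin p) :
    ∑ i ∈ s, res w y βh i * w i j = 0 := by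
  set B := ∑ i ∈ s, res w y βh i * w i j
  set C := ∑ i ∈ s, w i j ^ 2
  have hquad : ∀ t, 0 ≤ C * (t * t) + (-2 * B) * t + 0 := fun t => by
    have hexpand : ∑ i ∈ s, res w y (βh + Pi.single j t) i ^ 2
        = ∑ i ∈ s, res w y βh i ^ 2 + (C * (t * t) + (-2 * B) * t) := by
      simp only [res_add_single, C, B, Finset.mul_sum, Finset.sum_mul, ← Finset.sum_add_distrib]
      exact Finset.sum_congr rfl fun i _ => by ring
    linarith [hmin (βh + Pi.single j t)]
  have := discrim_le_zero hquad
  rw [discrim] at this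
  nlinarith [sq_nonneg B]

theorem Oemp_le_of_card_eq {h : ℕ} {s : Finset (Fin n)} (hs : s.card = h) (β : Fin p → ℝ) :
    Oemp w y h β ≤ 1 / n * ∑ i ∈ s, res w y β i ^ 2 :=
  mul_le_mul_of_nonneg_left
    (csInf_le (Set.Finite.image _ (Set.toFinite _)).bddBelow ⟨s, hs, rfl⟩) (by positivity)

theorem Oemp_eq_of_mem_iff_le {h : ℕ} {s : Finset (Fin n)} {β : Fin p → ℝ} {t : ℝ}
    (hs : s.card = h) (hmem : ∀ i, i ∈ s ↔ res w y β i ^ 2 ≤ t) :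
    Oemp w y h β = 1 / n * ∑ i ∈ s, res w y β i ^ 2 := by
  refine le_antisymm (Oemp_le_of_card_eq hs β) (mul_le_mul_of_nonneg_left ?_ (by positivity))
  refine le_csInf ⟨_, s, hs, rfl⟩ ?_
  rintro _ ⟨s', hs', rfl⟩
  exact sum_le_sum_of_mem_iff_le _ hmem (hs'.trans hs.symm)

theorem sum_sq_res_le_of_Oemp_le {h : ℕ} {s : Finset (Fin n)} {βh β : Fin p → ℝ} {t : ℝ}
    (hs : s.card = h) (hmem : ∀ i, i ∈ s ↔ res w y βh i ^ 2 ≤ t)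
    (hmin : Oemp w y h βh ≤ Oemp w y h β) :
    ∑ i ∈ s, res w y βh i ^ 2 ≤ ∑ i ∈ s, res w y β i ^ 2 := by
  rcases Nat.eq_zero_or_pos n with rfl | hn
  · simp [Subsingleton.elim s ∅]
  have h1 := (Oemp_eq_of_mem_iff_le hs hmem).symm.trans_le (hmin.trans (Oemp_le_of_card_eq hs β))
  exact le_of_mul_le_mul_left h1 (by positivity)

theorem IsHSeq.swap_comp {h : ℕ} {k : Fin h → Fin n} {β : Fin p → ℝ} (hk : IsHSeq w y k β)
    {a b : Fin n} (hab : res w y β a ^ 2 = res w y β b ^ 2) :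
    IsHSeq w y (Equiv.swap a b ∘ k) β := by
  have hσ : ∀ x, res w y β (Equiv.swap a b x) ^ 2 = res w y β x ^ 2 := fun x => by
    rcases eq_or_ne x a with rfl | hxa
    · rw [Equiv.swap_apply_left, hab]
    rcases eq_or_ne x b with rfl | hxb
    · rw [Equiv.swap_apply_right, hab]
    · rw [Equiv.swap_apply_of_ne_of_ne hxa hxb]
  obtain ⟨hinj, hmono, hout⟩ := hk
  refine ⟨(Equiv.injective _).comp hinj, fun i j hij => ?_, fun m hm i => ?_⟩
  · simpa only [Function.comp_apply, hσ] using hmono i j hij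
  · have hm' : Equiv.swap a b m ∉ Set.range k := fun ⟨l, hl⟩ =>
      hm ⟨l, by rw [Function.comp_apply, hl, Equiv.swap_apply_self]⟩
    simpa only [Function.comp_apply, hσ] using hout _ hm' i

theorem sq_res_lt_of_mem_Sreg {h : ℕ} {k : Fin h → Fin n} {β : Fin p → ℝ}
    (hβ : β ∈ Sreg w y k) {m : Fin n} (hm : m ∉ Set.range k) (i : Fin h) :
    res w y β (k i) ^ 2 < res w y β m ^ 2 := by
  obtain ⟨hk, huniq⟩ := hβ
  refine (hk.2.2 m hm i).lt_of_ne fun heq => hm ⟨i, ?_⟩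
  have := congrFun (huniq _ (hk.swap_comp heq)) i
  rw [Function.comp_apply, Equiv.swap_apply_left] at this
  exact this.symm

theorem filter_sq_res_le_hthSqRes_of_mem_Sreg {h : ℕ} {k : Fin h → Fin n} {β : Fin p → ℝ}
    (hβ : β ∈ Sreg w y k) (hpos : 0 < h) :
    univ.filter (fun i => res w y β i ^ 2 ≤ hthSqRes w y h β) = univ.image k := by
  have hcard : (univ.image k).card = h := by
    rw [Finset.card_image_of_injective _ hβ.1.1, Finset.card_univ, Fintype.card_fin]
  have hsep : ∀ i ∈ univ.image k, ∀ m ∉ univ.image k, res w y β i ^ 2 < res w y β m ^ 2 := by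
    intro i hi m hm
    obtain ⟨l, -, rfl⟩ := Finset.mem_image.1 hi
    exact sq_res_lt_of_mem_Sreg hβ (fun ⟨l', hl'⟩ => hm (hl' ▸ Finset.mem_image_of_mem k
      (Finset.mem_univ l'))) l
  have := filter_le_sInf_card_filter_le_eq (fun i => res w y β i ^ 2)
    (Finset.univ_nonempty_iff.2 ⟨⟨0, hpos⟩⟩ |>.image k) hsep
  rwa [hcard] at this

/-- For `h = 0` the set defining `hthSqRes` is all of `ℝ`, whose `sInf` is the junk value `0`. -/
theorem sum_res_mul_filter_le_hthSqRes_zero (β : Fin p → ℝ) (j : Fin p) :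
    (∑ i ∈ univ.filter (fun i => res w y β i ^ 2 ≤ hthSqRes w y 0 β), res w y β i * w i j) = 0 := by
  have hth : hthSqRes w y 0 β = 0 := by
    simp only [hthSqRes, zero_le, Set.ofPred_true, Real.sInf_univ]
  refine Finset.sum_eq_zero fun i hi => ?_
  rw [Finset.mem_filter, hth] at hi
  rw [pow_eq_zero_iff two_ne_zero |>.1 (le_antisymm hi.2 (sq_nonneg _)), zero_mul]

end LTS

open scoped Classical in
/-- Theorem 2.1 (ii): under (A0) and (A1), almost surely, over the region `S_{β^{l₀}}`
containing the LTS estimator, the LTS estimator satisfies the normal equations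
`∑_{i=1}^n (y_i - w_i'β) w_i 1(r_i(β)² ≤ r²_{h:n}(β)) = 0`. -/
theorem stmt_4 {Ω : Type*} [MeasurableSpace Ω] (P : Measure Ω)
    (n p hn : ℕ)
    (w : Ω → Fin n → Fin p → ℝ) (y : Ω → Fin n → ℝ) :
    ∀ᵐ ω ∂P, ∀ (βh : Fin p → ℝ) (k : Fin hn → Fin n),
      (∀ β : Fin p → ℝ, Oemp (w ω) (y ω) hn βh ≤ Oemp (w ω) (y ω) hn β) →
      βh ∈ Sreg (w ω) (y ω) k →
      ∀ j : Fin p,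
        (∑ i : Fin n, if (res (w ω) (y ω) βh i) ^ 2 ≤ hthSqRes (w ω) (y ω) hn βh
          then res (w ω) (y ω) βh i * w ω i j else 0) = 0 := by
  refine ae_of_all P fun ω βh k hmin hS j => ?_
  rw [← Finset.sum_filter]
  rcases Nat.eq_zero_or_pos hn with rfl | hpos
  · exact sum_res_mul_filter_le_hthSqRes_zero βh j
  set S := univ.filter fun i => res (w ω) (y ω) βh i ^ 2 ≤ hthSqRes (w ω) (y ω) hn βh
  have hcard : S.card = hn := by
    rw [show S = univ.image k from filter_sq_res_le_hthSqRes_of_mem_Sreg hS hpos,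
      Finset.card_image_of_injective _ hS.1.1, Finset.card_univ, Fintype.card_fin]
  have hmem : ∀ i, i ∈ S ↔ res (w ω) (y ω) βh i ^ 2 ≤ hthSqRes (w ω) (y ω) hn βh := fun i => by
    simp [S]
  exact sum_res_mul_eq_zero_of_forall_sum_sq_le
    (fun β => sum_sq_res_le_of_Oemp_le hcard hmem (hmin β)) j
end
end

section
/- Under assumptions (A0) and (A1), over the region S_{β^{l0}} containing the LTS estimator, β̂^n_lts is the unique solution of the fixed-point equation β̂^n_lts = M_n(Y_n, X_n, β̂^n_lts, α)^{-1} Σ_{i=1}^h y_{k_i(β^{l0})} w_{k_i(β^{l0})}, where M_n(Y_n, X_n, β, α) = Σ_{i=1}^h w_{k_i(β)} w_{k_i(β)}' is invertible. -/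
open MeasureTheory Finset Metric
open scoped ENNReal

noncomputable section

/-!
On the region `Sreg k`, the LTS objective at `β` is `1 / n` times the least-squares criterion of
the `h` observations indexed by `k`, while at every `β` it is at most that (it is a minimum over
all `h`-subsets). Hence an LTS minimiser lying in `Sreg k` also minimises the least-squares
criterion of the subsample `k`. By (A1) the subsample design `X` has full column rank, so `XᵀX` is
invertible, and the Pythagorean identity
`‖Y - Xβ‖² = ‖Y - X β_ols‖² + ‖X (β - β_ols)‖²` (orthogonality from the normal equations)
shows that `β_ols = (XᵀX)⁻¹ XᵀY` is the only minimiser.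
-/

open scoped Matrix

namespace Finset

variable {ι M : Type*} [DecidableEq ι] [AddCommMonoid M] [LinearOrder M] [IsOrderedAddMonoid M]

theorem sum_le_sum_of_card_eq_of_forall_le {s t : Finset ι} (f : ι → M) (hcard : #t = #s)
    (hle : ∀ a ∈ t, ∀ b ∉ t, f a ≤ f b) : ∑ i ∈ t, f i ≤ ∑ i ∈ s, f i := by
  rcases (t \ s).eq_empty_or_nonempty with hts | hts
  · rw [eq_of_subset_of_card_le (sdiff_eq_empty_iff_subset.mp hts) hcard.ge]
  obtain ⟨a, ha, hmax⟩ := exists_max_image (t \ s) f hts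
  calc ∑ i ∈ t, f i = ∑ i ∈ t ∩ s, f i + ∑ i ∈ t \ s, f i := (sum_inter_add_sum_sdiff t s f).symm
    _ ≤ ∑ i ∈ s ∩ t, f i + #(s \ t) • f a := by
        rw [inter_comm, card_sdiff_comm hcard.symm]
        gcongr
        exact sum_le_card_nsmul _ _ _ hmax
    _ ≤ ∑ i ∈ s ∩ t, f i + ∑ i ∈ s \ t, f i := by
        gcongr
        refine card_nsmul_le_sum _ _ _ fun b hb => ?_
        exact hle a (mem_sdiff.mp ha).1 b (mem_sdiff.mp hb).2
    _ = ∑ i ∈ s, f i := sum_inter_add_sum_sdiff s t f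

end Finset

namespace Matrix

theorem ker_mulVecLin_eq_bot_of_rank_eq_card {m n K : Type*} [Fintype n] [Field K]
    (A : Matrix m n K) (h : A.rank = Fintype.card n) : LinearMap.ker A.mulVecLin = ⊥ := by
  have := LinearMap.finrank_range_add_finrank_ker A.mulVecLin
  rw [Module.finrank_fintype_fun_eq_card, ← rank, h] at this
  exact Submodule.finrank_eq_zero.mp (by omega)

variable {m n : Type*} [Fintype m] [Fintype n] [DecidableEq n] {X : Matrix m n ℝ}

theorem isUnit_det_transpose_mul_self (hX : LinearMap.ker X.mulVecLin = ⊥) :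
    IsUnit (Xᵀ * X).det := by
  rw [isUnit_iff_ne_zero, Ne, ← exists_mulVec_eq_zero_iff]
  rintro ⟨v, hv, hXv⟩
  have : v ∈ LinearMap.ker (Xᵀ * X).mulVecLin := hXv
  rw [ker_mulVecLin_transpose_mul_self, hX] at this
  exact hv this

def ols (X : Matrix m n ℝ) (Y : m → ℝ) : n → ℝ := (Xᵀ * X)⁻¹ *ᵥ (Xᵀ *ᵥ Y)

theorem transpose_mulVec_sub_mulVec_ols (hX : LinearMap.ker X.mulVecLin = ⊥) (Y : m → ℝ) :
    Xᵀ *ᵥ (Y - X *ᵥ ols X Y) = 0 := by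
  rw [mulVec_sub, mulVec_mulVec, ols, mulVec_mulVec,
    mul_nonsing_inv _ (isUnit_det_transpose_mul_self hX), one_mulVec, sub_self]

theorem dotProduct_sub_mulVec_self (hX : LinearMap.ker X.mulVecLin = ⊥) (Y : m → ℝ)
    (β : n → ℝ) :
    (Y - X *ᵥ β) ⬝ᵥ (Y - X *ᵥ β) = (Y - X *ᵥ ols X Y) ⬝ᵥ (Y - X *ᵥ ols X Y) +
      (X *ᵥ (β - ols X Y)) ⬝ᵥ (X *ᵥ (β - ols X Y)) := by
  set r := Y - X *ᵥ ols X Y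
  set d := X *ᵥ (β - ols X Y)
  have hrd : r ⬝ᵥ d = 0 := by
    rw [dotProduct_mulVec, ← mulVec_transpose, transpose_mulVec_sub_mulVec_ols hX, zero_dotProduct]
  have hsplit : Y - X *ᵥ β = r - d := by
    simp only [r, d, mulVec_sub]
    abel
  clear_value r d
  rw [hsplit, sub_dotProduct, dotProduct_sub, dotProduct_sub, dotProduct_comm d r, hrd]
  abel

theorem eq_ols_of_sum_sq_le (hX : LinearMap.ker X.mulVecLin = ⊥) {Y : m → ℝ} {β : n → ℝ}
    (hβ : ∑ i, (Y - X *ᵥ β) i ^ 2 ≤ ∑ i, (Y - X *ᵥ ols X Y) i ^ 2) : β = ols X Y := by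
  have sum_sq_eq (v : m → ℝ) : ∑ i, v i ^ 2 = v ⬝ᵥ v := by simp only [dotProduct, sq]
  rw [sum_sq_eq, sum_sq_eq, dotProduct_sub_mulVec_self hX] at hβ
  have hd : X *ᵥ (β - ols X Y) ⬝ᵥ X *ᵥ (β - ols X Y) = 0 :=
    le_antisymm (by linarith) (dotProduct_self_star_nonneg _)
  rw [dotProduct_self_eq_zero] at hd
  have : β - ols X Y ∈ LinearMap.ker X.mulVecLin := hd
  rw [hX, Submodule.mem_bot, sub_eq_zero] at this
  exact this

end Matrix

section LTS

variable {n p h : ℕ} {w : Fin n → Fin p → ℝ} {y : Fin n → ℝ} {k : Fin h → Fin n}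

theorem card_image_univ_of_injective (hk : Function.Injective k) : #(univ.image k) = h := by
  simp [card_image_of_injective _ hk]

theorem Oemp_le_of_injective (hk : Function.Injective k) (β : Fin p → ℝ) :
    Oemp w y h β ≤ 1 / n * ∑ i, res w y β (k i) ^ 2 := by
  unfold Oemp
  gcongr
  rw [← sum_image (f := fun a => res w y β a ^ 2) fun a _ b _ hab => hk hab]
  exact csInf_le ((Set.toFinite _).image _).bddBelow ⟨_, card_image_univ_of_injective hk, rfl⟩

theorem Oemp_eq_of_isHSeq {β : Fin p → ℝ} (hk : IsHSeq w y k β) :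
    Oemp w y h β = 1 / n * ∑ i, res w y β (k i) ^ 2 := by
  unfold Oemp
  rw [← sum_image (f := fun a => res w y β a ^ 2) fun a _ b _ hab => hk.1 hab]
  congr 1
  refine IsLeast.csInf_eq ⟨⟨_, card_image_univ_of_injective hk.1, rfl⟩, ?_⟩
  rintro _ ⟨s, hs, rfl⟩
  refine sum_le_sum_of_card_eq_of_forall_le _ ((card_image_univ_of_injective hk.1).trans hs.symm) ?_
  intro a ha b hb
  obtain ⟨i, -, rfl⟩ := mem_image.mp ha
  refine hk.2.2 b ?_ i
  rintro ⟨j, rfl⟩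
  exact hb (mem_image_of_mem k (mem_univ j))

theorem sum_sq_res_le_of_forall_Oemp_le {βh : Fin p → ℝ} (hk : IsHSeq w y k βh)
    (hmin : ∀ β, Oemp w y h βh ≤ Oemp w y h β) (β : Fin p → ℝ) :
    ∑ i, res w y βh (k i) ^ 2 ≤ ∑ i, res w y β (k i) ^ 2 := by
  -- for `n = 0` the factor `1 / n` is `0`, but then there is no `k : Fin h → Fin 0` unless `h = 0`
  rcases n.eq_zero_or_pos with rfl | hn
  · have : IsEmpty (Fin h) := k.isEmpty
    simp
  have := (Oemp_eq_of_isHSeq hk).symm.trans_le ((hmin β).trans (Oemp_le_of_injective hk.1 β))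
  exact le_of_mul_le_mul_left this (by positivity)

theorem A1.ker_mulVecLin_submatrix_eq_bot (hA : A1 w h) (hk : Function.Injective k) :
    LinearMap.ker ((Matrix.of w).submatrix k id).mulVecLin = ⊥ := by
  refine Matrix.ker_mulVecLin_eq_bot_of_rank_eq_card _ ?_
  let e : Fin h ≃ {x // x ∈ univ.image k} := Equiv.ofBijective
    (fun i => ⟨k i, mem_image_of_mem k (mem_univ i)⟩)
    ⟨fun i j hij => hk (congrArg Subtype.val hij), by
      rintro ⟨x, hx⟩
      obtain ⟨i, -, rfl⟩ := mem_image.mp hx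
      exact ⟨i, rfl⟩⟩
  have hX : ((Matrix.of w).submatrix (fun i : {x // x ∈ univ.image k} => (i : Fin n)) id).submatrix
      e (Equiv.refl _) = (Matrix.of w).submatrix k id := rfl
  rw [Fintype.card_fin, ← hX, Matrix.rank_submatrix, hA.2 _ (card_image_univ_of_injective hk)]

end LTS

/-- Theorem 2.1 (iii): under (A0) and (A1), almost surely, over the region `S_{β^{l₀}}`
containing the LTS estimator, the matrix `M_n = ∑_{i=1}^h w_{k_i} w_{k_i}'` is invertible
and the LTS estimator is the unique solution of the fixed-point equation
`β = M_n⁻¹ ∑_{i=1}^h y_{k_i} w_{k_i}`. -/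
theorem stmt_5 {Ω : Type*} [MeasurableSpace Ω] (P : Measure Ω)
    (n p hn : ℕ)
    (w : Ω → Fin n → Fin p → ℝ) (y : Ω → Fin n → ℝ)
    (hA1 : ∀ ω, A1 (w ω) hn) :
    ∀ᵐ ω ∂P, ∀ (βh : Fin p → ℝ) (k : Fin hn → Fin n),
      (∀ β : Fin p → ℝ, Oemp (w ω) (y ω) hn βh ≤ Oemp (w ω) (y ω) hn β) →
      βh ∈ Sreg (w ω) (y ω) k →
      IsUnit (Matrix.of fun j j' : Fin p =>
          ∑ i : Fin hn, w ω (k i) j * w ω (k i) j').det ∧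
      βh = (Matrix.of fun j j' : Fin p =>
          ∑ i : Fin hn, w ω (k i) j * w ω (k i) j')⁻¹.mulVec
            (fun j => ∑ i : Fin hn, y ω (k i) * w ω (k i) j) ∧
      (∀ β ∈ Sreg (w ω) (y ω) k,
        β = (Matrix.of fun j j' : Fin p =>
            ∑ i : Fin hn, w ω (k i) j * w ω (k i) j')⁻¹.mulVec
              (fun j => ∑ i : Fin hn, y ω (k i) * w ω (k i) j) → β = βh) := by
  refine Filter.Eventually.of_forall fun ω βh k hmin hS => ?_
  set X := (Matrix.of (w ω)).submatrix k id
  have hgram : (Matrix.of fun j j' : Fin p => ∑ i : Fin hn, w ω (k i) j * w ω (k i) j') = Xᵀ * X := by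
    ext
    simp [X, Matrix.mul_apply]
  have hmoment : (fun j => ∑ i : Fin hn, y ω (k i) * w ω (k i) j) = Xᵀ *ᵥ (y ω ∘ k) := by
    ext
    simp [X, Matrix.mulVec, dotProduct, mul_comm]
  have hX := (hA1 ω).ker_mulVecLin_submatrix_eq_bot hS.1.1
  have hβh : βh = X.ols (y ω ∘ k) :=
    Matrix.eq_ols_of_sum_sq_le hX (sum_sq_res_le_of_forall_Oemp_le hS.1 hmin _)
  rw [hgram, hmoment]
  exact ⟨Matrix.isUnit_det_transpose_mul_self hX, hβh, fun β _ hβ => hβ.trans hβh.symm⟩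
end
end

section
/- Assume that W(β) = (y - w'β)² has a positive density for every β, that q_ε(z, β, α) is continuous in β, and that P((t - v'β)² = q_ε(z, β, α)) = 0 for every β ∈ R^p. Then both minimizers β_lts(F_{(x', y)}, α) = argmin_β O(F_{(x', y)}, β, α) and β_lts(F_ε(z), α) = argmin_β O(F_ε(z), β, α) exist. -/
open MeasureTheory Metric
open scoped ENNReal Classical

noncomputable section

/-- The (lower) `a`-quantile of a distribution `ν` on `ℝ`. -/
def quant (ν : Measure ℝ) (a : ℝ) : ℝ :=
  sInf {t : ℝ | a ≤ (ν (Set.Iic t)).toReal}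

/-- `w = (1, x')'`. -/
def wcons {q : ℕ} (x : Fin q → ℝ) : Fin (q + 1) → ℝ := Fin.cons 1 x

/-- Population residual: for `z = (x, y)`, `r(β) = y - w'β` with `w = (1, x')'`. -/
def resP {q : ℕ} (z : (Fin q → ℝ) × ℝ) (β : Fin (q + 1) → ℝ) : ℝ :=
  z.2 - ∑ j, wcons z.1 j * β j

/-- `q(β, a)`: the `a`-quantile of `W(β) = (y - w'β)²` under `μ`. -/
def qLTS {q : ℕ} (μ : Measure ((Fin q → ℝ) × ℝ)) (β : Fin (q + 1) → ℝ) (a : ℝ) : ℝ :=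
  quant (μ.map fun z => (resP z β) ^ 2) a

/-- The population LTS objective `O(β) = E[(y - w'β)² 1((y - w'β)² ≤ q(β, a))]`. -/
def Opop {q : ℕ} (μ : Measure ((Fin q → ℝ) × ℝ)) (a : ℝ) (β : Fin (q + 1) → ℝ) : ℝ :=
  ∫ z, (if (resP z β) ^ 2 ≤ qLTS μ β a then (resP z β) ^ 2 else 0) ∂μ

/-- A distribution on `ℝ` has a positive density (on the support `(0, ∞)` of a squared
residual) if it is given by a Lebesgue density which is positive on `(0, ∞)`. -/
def HasPositiveDensity (ν : Measure ℝ) : Prop :=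
  ∃ f : ℝ → ℝ≥0∞, ν = (volume : Measure ℝ).withDensity f ∧ ∀ t : ℝ, 0 < t → 0 < f t

/-- The point-mass contaminated distribution `F_ε(z) = (1 - ε) F + ε δ_z`. -/
def contam {q : ℕ} (μ : Measure ((Fin q → ℝ) × ℝ)) (ε : ℝ) (z : (Fin q → ℝ) × ℝ) :
    Measure ((Fin q → ℝ) × ℝ) :=
  ENNReal.ofReal (1 - ε) • μ + ENNReal.ofReal ε • Measure.dirac z

/-!
Write `F_β` for the distribution function of the squared residual `(y - x ⬝ᵥ β)²`. When the
quantile carries no atom, the layer-cake formula turns the LTS objective into the trimmed moment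
`∫₀^∞ (α - F_β(t))⁺ dt`, and it suffices to show that trimmed moments of any finite measure
attain their infimum. After removing the directions `d` with `x ⬝ᵥ d = 0` a.e., a minimising
sequence either has a bounded subsequence, and Fatou's lemma applies, or escapes to infinity in
some direction `d`. In the latter case the residuals of all observations off the hyperplane
`x ⬝ᵥ d = 0` blow up, so the problem passes to the measure restricted to that hyperplane, whose
space of degenerate directions is strictly larger; induction on its codimension concludes.
-/

open Filter Set Topology

section Residual

variable {n : ℕ}

def linRes (p : (Fin n → ℝ) × ℝ) (β : Fin n → ℝ) : ℝ := p.2 - p.1 ⬝ᵥ β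

lemma continuous_linRes (β : Fin n → ℝ) : Continuous fun p : (Fin n → ℝ) × ℝ => linRes p β :=
  continuous_snd.sub (continuous_fst.dotProduct continuous_const)

lemma continuous_linRes_left (p : (Fin n → ℝ) × ℝ) : Continuous (linRes p) :=
  continuous_const.sub (continuous_const.dotProduct continuous_id)

lemma measurableSet_linRes_sq_le (β : Fin n → ℝ) (t : ℝ) :
    MeasurableSet {p : (Fin n → ℝ) × ℝ | linRes p β ^ 2 ≤ t} :=
  (isClosed_le ((continuous_linRes β).pow 2) continuous_const).measurableSet

def resCDF (ρ : Measure ((Fin n → ℝ) × ℝ)) (β : Fin n → ℝ) (t : ℝ) : ℝ≥0∞ :=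
  ρ {p | linRes p β ^ 2 ≤ t}

lemma monotone_resCDF (ρ : Measure ((Fin n → ℝ) × ℝ)) (β : Fin n → ℝ) :
    Monotone (resCDF ρ β) :=
  fun _ _ hst => measure_mono fun _ hp => le_trans hp hst

/-- By the layer-cake formula, the integral of the squared residuals over the part of `ρ` of
mass `α` with the smallest residuals (truncated subtraction in `ℝ≥0∞` is the positive part). -/
def trimmedMoment (ρ : Measure ((Fin n → ℝ) × ℝ)) (α : ℝ≥0∞) (β : Fin n → ℝ) : ℝ≥0∞ :=
  ∫⁻ t in Ioi 0, (α - resCDF ρ β t)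

def truncTrimmedMoment (ρ : Measure ((Fin n → ℝ) × ℝ)) (α : ℝ≥0∞) (β : Fin n → ℝ)
    (j : ℝ) : ℝ≥0∞ :=
  ∫⁻ t in Ioc 0 j, (α - resCDF ρ β t)

variable {ρ : Measure ((Fin n → ℝ) × ℝ)}

lemma truncTrimmedMoment_le_trimmedMoment (α : ℝ≥0∞) (β : Fin n → ℝ) (j : ℝ) :
    truncTrimmedMoment ρ α β j ≤ trimmedMoment ρ α β :=
  lintegral_mono_set Ioc_subset_Ioi_self

lemma trimmedMoment_le_trimmedMoment_of_le {ρ' : Measure ((Fin n → ℝ) × ℝ)} (h : ρ' ≤ ρ) (α : ℝ≥0∞)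
    (β : Fin n → ℝ) : trimmedMoment ρ α β ≤ trimmedMoment ρ' α β :=
  lintegral_mono fun _ => tsub_le_tsub_left (h _) _

lemma truncTrimmedMoment_eq_lintegral_indicator (α : ℝ≥0∞) (β : Fin n → ℝ) (j : ℝ) :
    truncTrimmedMoment ρ α β j
      = ∫⁻ t in Ioi 0, (Ioc 0 j).indicator (fun t => α - resCDF ρ β t) t := by
  rw [lintegral_indicator measurableSet_Ioc, Measure.restrict_restrict measurableSet_Ioc,
    inter_eq_left.2 Ioc_subset_Ioi_self, truncTrimmedMoment]

lemma tendsto_resCDF_ae [IsFiniteMeasure ρ] {β : ℕ → Fin n → ℝ} {γ : Fin n → ℝ}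
    (hβ : Tendsto β atTop (𝓝 γ)) :
    ∀ᵐ t, Tendsto (fun k => resCDF ρ (β k) t) atTop (𝓝 (resCDF ρ γ t)) := by
  have hatoms : {t : ℝ | 0 < ρ {p | linRes p γ ^ 2 = t}}.Countable :=
    Measure.countable_meas_level_set_pos ((continuous_linRes γ).pow 2).measurable
  filter_upwards [hatoms.ae_notMem volume] with t ht
  have hnull : ρ {p | linRes p γ ^ 2 = t} = 0 := by simpa using ht
  refine tendsto_measure_of_ae_tendsto_indicator_of_isFiniteMeasure atTop
    (measurableSet_linRes_sq_le γ t) (fun k => measurableSet_linRes_sq_le (β k) t) ?_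
  filter_upwards [measure_eq_zero_iff_ae_notMem.1 hnull] with p hp
  have hres : Tendsto (fun k => linRes p (β k) ^ 2) atTop (𝓝 (linRes p γ ^ 2)) :=
    (((continuous_linRes_left p).pow 2).tendsto γ).comp hβ
  rcases lt_or_gt_of_ne (hp : linRes p γ ^ 2 ≠ t) with hlt | hgt
  · filter_upwards [hres.eventually (gt_mem_nhds hlt)] with k hk
    exact iff_of_true hk.le hlt.le
  · filter_upwards [hres.eventually (lt_mem_nhds hgt)] with k hk
    exact iff_of_false hk.not_ge hgt.not_ge

lemma trimmedMoment_le_of_tendsto [IsFiniteMeasure ρ] {lam bseq : ℕ → ℝ≥0∞}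
    {β : ℕ → Fin n → ℝ} {j : ℕ → ℝ} {α b : ℝ≥0∞} {γ : Fin n → ℝ}
    (hlam : Tendsto lam atTop (𝓝 α)) (hβ : Tendsto β atTop (𝓝 γ))
    (hj : Tendsto j atTop atTop) (hb : Tendsto bseq atTop (𝓝 b))
    (hle : ∀ᶠ k in atTop, truncTrimmedMoment ρ (lam k) (β k) (j k) ≤ bseq k) :
    trimmedMoment ρ α γ ≤ b := by
  set g : ℕ → ℝ → ℝ≥0∞ := fun k => (Ioc 0 (j k)).indicator fun t => lam k - resCDF ρ (β k) t
  have hlim : ∀ᵐ t ∂volume.restrict (Ioi 0),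
      Tendsto (g · t) atTop (𝓝 (α - resCDF ρ γ t)) := by
    filter_upwards [ae_restrict_of_ae (tendsto_resCDF_ae (ρ := ρ) hβ),
      ae_restrict_mem measurableSet_Ioi] with t ht ht0
    refine (ENNReal.Tendsto.sub hlam ht (Or.inr (measure_ne_top _ _))).congr' ?_
    filter_upwards [hj.eventually_ge_atTop t] with k hk
    exact (indicator_of_mem (mem_Ioc.2 ⟨ht0, hk⟩) (fun t => lam k - resCDF ρ (β k) t)).symm
  calc trimmedMoment ρ α γ = ∫⁻ t in Ioi 0, liminf (g · t) atTop :=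
        lintegral_congr_ae (hlim.mono fun t ht => ht.liminf_eq.symm)
    _ ≤ liminf (fun k => ∫⁻ t in Ioi 0, g k t) atTop := lintegral_liminf_le fun k =>
        (measurable_const.sub (monotone_resCDF ρ (β k)).measurable).indicator measurableSet_Ioc
    _ ≤ liminf bseq atTop := liminf_le_liminf <| by
        simpa only [g, ← truncTrimmedMoment_eq_lintegral_indicator] using hle
    _ = b := hb.liminf_eq

end Residual

section Degenerate

variable {n : ℕ} {ρ : Measure ((Fin n → ℝ) × ℝ)}

def degenerateDirections (ρ : Measure ((Fin n → ℝ) × ℝ)) : Submodule ℝ (Fin n → ℝ) where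
  carrier := {d | ∀ᵐ p : (Fin n → ℝ) × ℝ ∂ρ, p.1 ⬝ᵥ d = 0}
  zero_mem' := by simp
  add_mem' {d e} hd he := by
    change ∀ᵐ p : (Fin n → ℝ) × ℝ ∂ρ, p.1 ⬝ᵥ (d + e) = 0
    filter_upwards [hd, he] with p h₁ h₂
    simp [dotProduct_add, h₁, h₂]
  smul_mem' c d hd := by
    change ∀ᵐ p : (Fin n → ℝ) × ℝ ∂ρ, p.1 ⬝ᵥ (c • d) = 0
    filter_upwards [hd] with p h
    simp [dotProduct_smul, h]

lemma resCDF_congr {β γ : Fin n → ℝ} (h : β - γ ∈ degenerateDirections ρ) :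
    resCDF ρ β = resCDF ρ γ := by
  funext t
  refine measure_congr (eventuallyEq_set.2 ?_)
  filter_upwards [h] with p hp
  rw [dotProduct_sub, sub_eq_zero] at hp
  simp [linRes, hp]

lemma truncTrimmedMoment_congr {β γ : Fin n → ℝ} (h : β - γ ∈ degenerateDirections ρ)
    (α : ℝ≥0∞) (j : ℝ) : truncTrimmedMoment ρ α β j = truncTrimmedMoment ρ α γ j := by
  rw [truncTrimmedMoment, resCDF_congr h, truncTrimmedMoment]

lemma degenerateDirections_lt_restrict {d : Fin n → ℝ} (hd : d ∉ degenerateDirections ρ) :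
    degenerateDirections ρ < degenerateDirections (ρ.restrict {p | p.1 ⬝ᵥ d = 0}) := by
  refine lt_of_le_of_ne (fun e he => ae_restrict_of_ae he) fun h => hd ?_
  rw [h]
  exact ae_restrict_mem ((continuous_fst.dotProduct continuous_const).measurable
    (measurableSet_singleton 0))

end Degenerate

/-- The varying levels `lam` and truncations `j` make this property stable under restricting `ρ`
to a hyperplane, which is what the induction on the codimension of the degenerate directions
needs. -/
def AttainsTrimmedBounds {n : ℕ} (ρ : Measure ((Fin n → ℝ) × ℝ)) : Prop :=
  ∀ (lam bseq : ℕ → ℝ≥0∞) (β : ℕ → Fin n → ℝ) (j : ℕ → ℝ) (α b : ℝ≥0∞),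
    Tendsto lam atTop (𝓝 α) → Tendsto j atTop atTop → Tendsto bseq atTop (𝓝 b) →
    (∀ᶠ k in atTop, truncTrimmedMoment ρ (lam k) (β k) (j k) ≤ bseq k) →
    ∃ γ, trimmedMoment ρ α γ ≤ b

section Escape

variable {n : ℕ}

lemma abs_dotProduct_le {ι : Type*} [Fintype ι] (x e : ι → ℝ) : |x ⬝ᵥ e| ≤ (∑ i, |x i|) * ‖e‖ :=
  calc |x ⬝ᵥ e| ≤ ∑ i, |x i * e i| := Finset.abs_sum_le_sum_abs _ _
    _ ≤ ∑ i, |x i| * ‖e‖ := Finset.sum_le_sum fun i _ => by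
        rw [abs_mul]
        exact mul_le_mul_of_nonneg_left (norm_le_pi_norm e i) (abs_nonneg _)
    _ = (∑ i, |x i|) * ‖e‖ := (Finset.sum_mul ..).symm

/-- The quantities `|y|`, `∑ i, |x i|` and `|x ⬝ᵥ d|⁻¹` that bound the residual of `(x, y)` from
below along parameters escaping in direction `d` (`sub_le_abs_linRes`). -/
def escapeScale (d : Fin n → ℝ) (p : (Fin n → ℝ) × ℝ) : ℝ :=
  max (max |p.2| (∑ i, |p.1 i|)) |p.1 ⬝ᵥ d|⁻¹

def escapeTail (d : Fin n → ℝ) (M : ℝ) : Set ((Fin n → ℝ) × ℝ) :=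
  {p | p.1 ⬝ᵥ d ≠ 0 ∧ M < escapeScale d p}

lemma tendsto_measure_escapeTail (ρ : Measure ((Fin n → ℝ) × ℝ)) [IsFiniteMeasure ρ]
    (d : Fin n → ℝ) : Tendsto (fun m : ℕ => ρ (escapeTail d ((m : ℝ) + 1))) atTop (𝓝 0) := by
  have hmeas : Measurable (escapeScale d) := by
    unfold escapeScale
    fun_prop
  have hempty : ⋂ m : ℕ, escapeTail d ((m : ℝ) + 1) = ∅ := by
    refine eq_empty_of_forall_notMem fun p hp => ?_
    obtain ⟨m, hm⟩ := exists_nat_gt (escapeScale d p)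
    exact (mem_iInter.1 hp m).2.not_gt (by linarith)
  have hanti : Antitone fun m : ℕ => escapeTail d ((m : ℝ) + 1) :=
    fun m m' h p hp => ⟨hp.1, lt_of_le_of_lt (by gcongr : (m : ℝ) + 1 ≤ m' + 1) hp.2⟩
  have hnull (m : ℕ) : NullMeasurableSet (escapeTail d ((m : ℝ) + 1)) ρ :=
    (((continuous_fst.dotProduct continuous_const).measurable
      (measurableSet_singleton 0)).compl.inter (measurableSet_lt measurable_const hmeas))
      |>.nullMeasurableSet
  have h := tendsto_measure_iInter_atTop hnull hanti ⟨0, measure_ne_top ρ _⟩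
  rwa [hempty, measure_empty] at h

lemma sub_le_abs_linRes {d β : Fin n → ℝ} {p : (Fin n → ℝ) × ℝ} {M : ℝ}
    (hpd : p.1 ⬝ᵥ d ≠ 0) (hp : escapeScale d p ≤ M)
    (hdir : ‖‖β‖⁻¹ • β - d‖ ≤ (2 * M ^ 2)⁻¹) :
    ‖β‖ / (2 * M) - M ≤ |linRes p β| := by
  obtain ⟨⟨hy, hx⟩, hxd⟩ : (|p.2| ≤ M ∧ ∑ i, |p.1 i| ≤ M) ∧ |p.1 ⬝ᵥ d|⁻¹ ≤ M := by
    simpa [escapeScale] using hp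
  have hxd0 : 0 < |p.1 ⬝ᵥ d| := abs_pos.2 hpd
  have hM : 0 < M := (inv_pos.2 hxd0).trans_le hxd
  set e := ‖β‖⁻¹ • β
  have hclose : |p.1 ⬝ᵥ e - p.1 ⬝ᵥ d| ≤ (2 * M)⁻¹ := by
    rw [← dotProduct_sub]
    calc _ ≤ (∑ i, |p.1 i|) * ‖e - d‖ := abs_dotProduct_le _ _
      _ ≤ M * (2 * M ^ 2)⁻¹ := by gcongr
      _ = (2 * M)⁻¹ := by field_simp
  have hxd' : M⁻¹ ≤ |p.1 ⬝ᵥ d| := (inv_le_comm₀ hxd0 hM).1 hxd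
  have he : (2 * M)⁻¹ ≤ |p.1 ⬝ᵥ e| := by
    have := abs_sub_abs_le_abs_sub (p.1 ⬝ᵥ d) (p.1 ⬝ᵥ e)
    rw [abs_sub_comm] at this
    have h2 : M⁻¹ = (2 * M)⁻¹ + (2 * M)⁻¹ := by field_simp; ring
    linarith
  have hfit : ‖β‖ / (2 * M) ≤ |p.1 ⬝ᵥ β| := by
    rcases eq_or_ne β 0 with rfl | hβ
    · simp
    have hβe : p.1 ⬝ᵥ β = ‖β‖ * p.1 ⬝ᵥ e := by simp [e, dotProduct_smul, hβ]
    rw [hβe, abs_mul, abs_norm, div_eq_mul_inv]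
    gcongr
  have := abs_sub_abs_le_abs_sub (p.1 ⬝ᵥ β) p.2
  rw [abs_sub_comm] at this
  unfold linRes
  linarith

lemma resCDF_le_restrict_add_escapeTail (ρ : Measure ((Fin n → ℝ) × ℝ)) {d β : Fin n → ℝ}
    {M t : ℝ} (hdir : ‖‖β‖⁻¹ • β - d‖ ≤ (2 * M ^ 2)⁻¹) (hs : 1 < ‖β‖ / (2 * M) - M)
    (ht : t ≤ ‖β‖ / (2 * M) - M) :
    resCDF ρ β t ≤ resCDF (ρ.restrict {p | p.1 ⬝ᵥ d = 0}) β t + ρ (escapeTail d M) := by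
  have hsub : {p | linRes p β ^ 2 ≤ t}
      ⊆ ({p | linRes p β ^ 2 ≤ t} ∩ {p | p.1 ⬝ᵥ d = 0}) ∪ escapeTail d M := by
    intro p hp
    by_contra hnot
    simp only [escapeTail, mem_union, mem_inter_iff, mem_ofPred_eq, not_or, not_and, not_lt]
      at hnot hp
    have hpd : p.1 ⬝ᵥ d ≠ 0 := fun h => hnot.1 hp h
    have := sub_le_abs_linRes hpd (hnot.2 hpd) hdir
    nlinarith [sq_abs (linRes p β)]
  calc resCDF ρ β t ≤ _ := measure_mono hsub
    _ ≤ _ := measure_union_le _ _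
    _ = _ := by rw [resCDF, Measure.restrict_apply (measurableSet_linRes_sq_le β t)]

end Escape

section Induction

variable {n : ℕ}

lemma truncTrimmedMoment_le_of_resCDF_le {ρ ρ' : Measure ((Fin n → ℝ) × ℝ)} {β : Fin n → ℝ}
    {lam η : ℝ≥0∞} {j j' : ℝ} (hj : j' ≤ j)
    (h : ∀ t ∈ Ioc 0 j', resCDF ρ β t ≤ resCDF ρ' β t + η) :
    truncTrimmedMoment ρ' (lam - η) β j' ≤ truncTrimmedMoment ρ lam β j :=
  calc truncTrimmedMoment ρ' (lam - η) β j' ≤ truncTrimmedMoment ρ lam β j' :=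
        setLIntegral_mono (measurable_const.sub (monotone_resCDF ρ β).measurable) fun t ht => by
          rw [tsub_tsub]
          exact tsub_le_tsub_left ((h t ht).trans_eq (add_comm _ _)) _
    _ ≤ truncTrimmedMoment ρ lam β j := lintegral_mono_set (Ioc_subset_Ioc_right hj)

/-- Off the hyperplane and outside the escape tail, the residuals at `u k` exceed the truncation
`j' k`, so below it only the hyperplane and the tail contribute to `resCDF ρ (u k)`. -/
lemma exists_truncTrimmedMoment_restrict_le (ρ : Measure ((Fin n → ℝ) × ℝ))
    {u : ℕ → Fin n → ℝ} {d : Fin n → ℝ} (hu : Tendsto (‖u ·‖) atTop atTop)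
    (hdir : Tendsto (fun k => ‖u k‖⁻¹ • u k) atTop (𝓝 d)) {M : ℝ} (hM : 0 < M)
    (lam : ℕ → ℝ≥0∞) {j : ℕ → ℝ} (hj : Tendsto j atTop atTop) :
    ∃ j' : ℕ → ℝ, Tendsto j' atTop atTop ∧ ∀ᶠ k in atTop,
      truncTrimmedMoment (ρ.restrict {p | p.1 ⬝ᵥ d = 0}) (lam k - ρ (escapeTail d M)) (u k)
        (j' k) ≤ truncTrimmedMoment ρ (lam k) (u k) (j k) := by
  set s : ℕ → ℝ := fun k => ‖u k‖ / (2 * M) - M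
  have hs : Tendsto s atTop atTop :=
    tendsto_atTop_add_const_right atTop (-M) (hu.atTop_div_const (by positivity))
  refine ⟨fun k => min (j k) (s k), tendsto_inf_atTop atTop hj hs, ?_⟩
  filter_upwards [hdir.eventually (closedBall_mem_nhds d (by positivity : (0 : ℝ) < (2 * M ^ 2)⁻¹)),
    hs.eventually_gt_atTop 1] with k hk hks
  refine truncTrimmedMoment_le_of_resCDF_le (min_le_left _ _) fun t ht => ?_
  exact resCDF_le_restrict_add_escapeTail ρ (mem_closedBall_iff_norm.1 hk) hks
    (ht.2.trans (min_le_right _ _))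

/-- Lowering the level by the tail mass `η m` passes the bound to the hyperplane and yields a
`γ m` for every `m`; a second application, with levels `α - η m → α`, removes the loss. -/
lemma AttainsTrimmedBounds.of_restrict {ρ : Measure ((Fin n → ℝ) × ℝ)} [IsFiniteMeasure ρ]
    {d : Fin n → ℝ} (hH : AttainsTrimmedBounds (ρ.restrict {p | p.1 ⬝ᵥ d = 0}))
    {lam bseq : ℕ → ℝ≥0∞} {u : ℕ → Fin n → ℝ} {j : ℕ → ℝ} {α b : ℝ≥0∞}
    (hu : Tendsto (‖u ·‖) atTop atTop) (hdir : Tendsto (fun k => ‖u k‖⁻¹ • u k) atTop (𝓝 d))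
    (hlam : Tendsto lam atTop (𝓝 α)) (hj : Tendsto j atTop atTop)
    (hb : Tendsto bseq atTop (𝓝 b))
    (hle : ∀ᶠ k in atTop, truncTrimmedMoment ρ (lam k) (u k) (j k) ≤ bseq k) :
    ∃ γ, trimmedMoment ρ α γ ≤ b := by
  set η : ℕ → ℝ≥0∞ := fun m => ρ (escapeTail d ((m : ℝ) + 1))
  have hlevel (m : ℕ) :
      ∃ γ, trimmedMoment (ρ.restrict {p | p.1 ⬝ᵥ d = 0}) (α - η m) γ ≤ b := by
    obtain ⟨j', hj', hle'⟩ :=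
      exists_truncTrimmedMoment_restrict_le ρ hu hdir (by positivity : (0 : ℝ) < m + 1) lam hj
    exact hH _ bseq u j' _ b (ENNReal.Tendsto.sub hlam tendsto_const_nhds
      (Or.inr (measure_ne_top _ _))) hj' hb ((hle'.and hle).mono fun k h => h.1.trans h.2)
  choose γ hγ using hlevel
  have hη : Tendsto (fun m => α - η m) atTop (𝓝 α) := by
    simpa using ENNReal.Tendsto.sub tendsto_const_nhds (tendsto_measure_escapeTail ρ d)
      (Or.inr ENNReal.zero_ne_top)
  obtain ⟨γ', hγ'⟩ := hH _ (fun _ => b) γ Nat.cast α b hη tendsto_natCast_atTop_atTop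
    tendsto_const_nhds (Eventually.of_forall fun m =>
      (truncTrimmedMoment_le_trimmedMoment _ _ _).trans (hγ m))
  exact ⟨γ', (trimmedMoment_le_trimmedMoment_of_le Measure.restrict_le_self α γ').trans hγ'⟩

end Induction

lemma exists_tendsto_inv_norm_smul {E : Type*} [NormedAddCommGroup E] [NormedSpace ℝ E]
    [FiniteDimensional ℝ E] {U : Submodule ℝ E} {u : ℕ → E} (hU : ∀ k, u k ∈ U)
    (hu : Tendsto (‖u ·‖) atTop atTop) :
    ∃ d ∈ U, d ≠ 0 ∧ ∃ φ : ℕ → ℕ, StrictMono φ ∧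
      Tendsto (fun k => ‖u (φ k)‖⁻¹ • u (φ k)) atTop (𝓝 d) := by
  have hK : IsCompact ((U : Set E) ∩ sphere 0 1) :=
    (isCompact_sphere 0 1).of_isClosed_subset
      (U.closed_of_finiteDimensional.inter isClosed_sphere) inter_subset_right
  have hmem : ∃ᶠ k in atTop, ‖u k‖⁻¹ • u k ∈ (U : Set E) ∩ sphere 0 1 := by
    refine (hu.eventually_gt_atTop 0).frequently.mono fun k hk => ⟨U.smul_mem _ (hU k), ?_⟩
    rw [mem_sphere_zero_iff_norm, norm_smul, norm_inv, norm_norm, inv_mul_cancel₀ hk.ne']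
  obtain ⟨d, ⟨hdU, hd1⟩, φ, hφ, hlim⟩ := hK.tendsto_subseq' hmem
  refine ⟨d, hdU, ?_, φ, hφ, hlim⟩
  rw [← norm_ne_zero_iff, mem_sphere_zero_iff_norm.1 hd1]
  exact one_ne_zero

section Induction

variable {n : ℕ}

lemma AttainsTrimmedBounds.of_restrict_hyperplane {ρ : Measure ((Fin n → ℝ) × ℝ)}
    [IsFiniteMeasure ρ] (h : ∀ d ∉ degenerateDirections ρ,
      AttainsTrimmedBounds (ρ.restrict {p | p.1 ⬝ᵥ d = 0})) :
    AttainsTrimmedBounds ρ := by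
  intro lam bseq β j α b hlam hj hb hle
  obtain ⟨U, hVU⟩ := (degenerateDirections ρ).exists_isCompl
  set u : ℕ → Fin n → ℝ := fun k => U.projection _ hVU.symm (β k)
  have hle' : ∀ᶠ k in atTop, truncTrimmedMoment ρ (lam k) (u k) (j k) ≤ bseq k := by
    refine hle.mono fun k hk => (truncTrimmedMoment_congr ?_ _ _).symm.trans_le hk
    simp [u, Submodule.projection_eq_self_sub_projection hVU]
  by_cases hbdd : ∃ C, ∃ᶠ k in atTop, ‖u k‖ ≤ C
  · obtain ⟨C, hC⟩ := hbdd
    obtain ⟨γ, -, φ, hφ, hlim⟩ := tendsto_subseq_of_frequently_bounded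
      (isBounded_closedBall (x := 0) (r := C)) (hC.mono fun k hk => mem_closedBall_zero_iff.2 hk)
    have hφ' := hφ.tendsto_atTop
    exact ⟨γ, trimmedMoment_le_of_tendsto (hlam.comp hφ') hlim (hj.comp hφ') (hb.comp hφ')
      (hφ'.eventually hle')⟩
  · push Not at hbdd
    have hu : Tendsto (‖u ·‖) atTop atTop :=
      tendsto_atTop.2 fun C => (hbdd C).mono fun _ => le_of_lt
    obtain ⟨d, hdU, hd0, φ, hφ, hdir⟩ :=
      exists_tendsto_inv_norm_smul (fun k => Submodule.projection_apply_mem _ _) hu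
    have hdV : d ∉ degenerateDirections ρ :=
      fun hd => hd0 (Submodule.disjoint_def.1 hVU.disjoint d hd hdU)
    have hφ' := hφ.tendsto_atTop
    exact (h d hdV).of_restrict (hu.comp hφ') hdir (hlam.comp hφ') (hj.comp hφ') (hb.comp hφ')
      (hφ'.eventually hle')

lemma attainsTrimmedBounds_of_le_add_finrank (k : ℕ) :
    ∀ (ρ : Measure ((Fin n → ℝ) × ℝ)) [IsFiniteMeasure ρ],
      n ≤ k + Module.finrank ℝ (degenerateDirections ρ) → AttainsTrimmedBounds ρ := by
  induction k with
  | zero =>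
    intro ρ _ hρ
    have htop : degenerateDirections ρ = ⊤ := Submodule.eq_top_of_finrank_eq <|
      (Submodule.finrank_le _).antisymm (by rw [Module.finrank_fin_fun]; omega)
    exact .of_restrict_hyperplane fun d hd => absurd (htop ▸ Submodule.mem_top) hd
  | succ k ih =>
    intro ρ _ hρ
    refine .of_restrict_hyperplane fun d hd => ih _ ?_
    have := Submodule.finrank_lt_finrank_of_lt (degenerateDirections_lt_restrict hd)
    omega

theorem exists_forall_trimmedMoment_le (ρ : Measure ((Fin n → ℝ) × ℝ)) [IsFiniteMeasure ρ]
    (α : ℝ≥0∞) : ∃ γ, ∀ β, trimmedMoment ρ α γ ≤ trimmedMoment ρ α β := by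
  obtain ⟨v, -, hv, hvmem⟩ :=
    exists_seq_tendsto_sInf (range_nonempty (trimmedMoment ρ α)) (OrderBot.bddBelow _)
  choose β hβ using hvmem
  obtain ⟨γ, hγ⟩ := attainsTrimmedBounds_of_le_add_finrank n ρ (by omega) (fun _ => α) v β
    Nat.cast α _ tendsto_const_nhds tendsto_natCast_atTop_atTop hv
    (Eventually.of_forall fun k => (hβ k).symm ▸ truncTrimmedMoment_le_trimmedMoment _ _ _)
  exact ⟨γ, fun β => hγ.trans (csInf_le (OrderBot.bddBelow _) ⟨β, rfl⟩)⟩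

end Induction

lemma measure_Iic_quant {ν : Measure ℝ} [IsProbabilityMeasure ν] {a : ℝ} (ha0 : 0 < a)
    (ha1 : a < 1) (hatom : ν {quant ν a} = 0) : ν (Iic (quant ν a)) = ENNReal.ofReal a := by
  set F := ProbabilityTheory.cdf ν
  set T := quant ν a
  have hT : T = sInf {t | a ≤ F t} := by
    simp [T, quant, F, ProbabilityTheory.cdf_eq_real, measureReal_def]
  have hne : {t | a ≤ F t}.Nonempty :=
    ((ProbabilityTheory.tendsto_cdf_atTop ν).eventually (eventually_ge_nhds ha1)).exists
  have hbdd : BddBelow {t | a ≤ F t} := by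
    obtain ⟨t₀, ht₀⟩ := eventually_atBot.1
      ((ProbabilityTheory.tendsto_cdf_atBot ν).eventually (eventually_lt_nhds ha0))
    exact ⟨t₀, fun t ht => le_of_not_gt fun h => (ht₀ t h.le).not_ge ht⟩
  have hge : a ≤ F T := by
    refine ge_of_tendsto ((F.right_continuous T).mono Ioi_subset_Ici_self)
      (eventually_nhdsWithin_of_forall fun t ht => ?_)
    obtain ⟨s, hs, hst⟩ := (csInf_lt_iff hbdd hne).1 (hT ▸ ht : sInf _ < t)
    exact hs.trans (F.mono hst.le)
  -- no atom at `T` makes the cdf left-continuous there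
  have hleft : F T ≤ Function.leftLim F T := by
    have h := F.measure_singleton T
    rw [ProbabilityTheory.measure_cdf, hatom] at h
    linarith [ENNReal.ofReal_eq_zero.1 h.symm]
  have hle : F T ≤ a := hleft.trans <| le_of_tendsto (F.mono.tendsto_leftLim T)
    (eventually_nhdsWithin_of_forall fun t ht =>
      (lt_of_not_ge fun h => (csInf_le hbdd h).not_gt (hT ▸ ht)).le)
  rw [← ProbabilityTheory.ofReal_cdf, le_antisymm hle hge]

section LayerCake

variable {Ω : Type*} [MeasurableSpace Ω] (μ : Measure Ω) [IsFiniteMeasure μ]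

lemma lintegral_ofReal_ite_le_eq {f : Ω → ℝ} (hf : Measurable f) (hf0 : 0 ≤ f) (T : ℝ) :
    ∫⁻ ω, ENNReal.ofReal (if f ω ≤ T then f ω else 0) ∂μ
      = ∫⁻ t in Ioi 0, (μ {ω | f ω ≤ T} - μ {ω | f ω ≤ t}) := by
  have hg0 : 0 ≤ᵐ[μ] fun ω => if f ω ≤ T then f ω else 0 :=
    ae_of_all _ fun ω => by dsimp only; split_ifs; exacts [hf0 ω, le_rfl]
  rw [lintegral_eq_lintegral_meas_lt μ hg0
    (hf.ite (measurableSet_le hf measurable_const) measurable_const).aemeasurable]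
  refine setLIntegral_congr_fun measurableSet_Ioi fun t ht => ?_
  have hset : {ω | t < if f ω ≤ T then f ω else 0} = {ω | f ω ≤ T} \ {ω | f ω ≤ t} := by
    ext ω
    simp only [mem_ofPred_eq, Set.mem_sdiff]
    split_ifs with h
    · simp [h]
    · simp [h, (mem_Ioi.1 ht).not_gt]
  rw [hset]
  rcases le_total t T with htT | hTt
  · exact measure_sdiff (fun ω hω => le_trans hω htT)
      (measurableSet_le hf measurable_const).nullMeasurableSet (measure_ne_top _ _)
  · have hempty : {ω | f ω ≤ T} \ {ω | f ω ≤ t} = ∅ :=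
      sdiff_eq_empty.2 fun ω hω => le_trans hω hTt
    rw [hempty, measure_empty, eq_comm]
    exact tsub_eq_zero_of_le (measure_mono fun ω hω => le_trans hω hTt)

lemma lintegral_ofReal_ite_le_ne_top (f : Ω → ℝ) (T : ℝ) :
    ∫⁻ ω, ENNReal.ofReal (if f ω ≤ T then f ω else 0) ∂μ ≠ ⊤ := by
  refine ne_top_of_le_ne_top (lintegral_const_lt_top (μ := μ) (ENNReal.ofReal_ne_top (r := T))).ne
    (lintegral_mono fun ω => ?_)
  split_ifs with h
  · exact ENNReal.ofReal_le_ofReal h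
  · simp

end LayerCake

section Objective

variable {q : ℕ}

/-- The observation `(w, y)` with `w = (1, x')'`, so that `resP z β = linRes (design z) β`. -/
def design (z : (Fin q → ℝ) × ℝ) : (Fin (q + 1) → ℝ) × ℝ := (wcons z.1, z.2)

lemma measurable_design : Measurable (design (q := q)) :=
  ((continuous_const.finCons continuous_fst).prodMk continuous_snd).measurable

lemma measurable_resP_sq (β : Fin (q + 1) → ℝ) :
    Measurable fun z : (Fin q → ℝ) × ℝ => resP z β ^ 2 :=
  ((continuous_linRes β).measurable.comp measurable_design).pow_const 2

lemma measure_resP_sq_eq (μ : Measure ((Fin q → ℝ) × ℝ)) (β : Fin (q + 1) → ℝ) (T : ℝ) :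
    μ {z | resP z β ^ 2 = T} = (μ.map fun z => resP z β ^ 2) {T} :=
  (Measure.map_apply (measurable_resP_sq β) (measurableSet_singleton T)).symm

lemma trimmedMoment_map_design (μ : Measure ((Fin q → ℝ) × ℝ)) [IsProbabilityMeasure μ]
    {a : ℝ} (ha0 : 0 < a) (ha1 : a < 1) {β : Fin (q + 1) → ℝ}
    (hatom : μ {z | resP z β ^ 2 = qLTS μ β a} = 0) :
    trimmedMoment (μ.map design) (ENNReal.ofReal a) β
      = ∫⁻ z, ENNReal.ofReal (if resP z β ^ 2 ≤ qLTS μ β a then resP z β ^ 2 else 0) ∂μ := by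
  have : IsProbabilityMeasure (μ.map fun z => resP z β ^ 2) :=
    Measure.isProbabilityMeasure_map (measurable_resP_sq β).aemeasurable
  have hq := measure_Iic_quant ha0 ha1 ((measure_resP_sq_eq μ β _).symm.trans hatom)
  rw [Measure.map_apply (measurable_resP_sq β) measurableSet_Iic] at hq
  rw [lintegral_ofReal_ite_le_eq μ (measurable_resP_sq β) (fun z => sq_nonneg _)]
  simp only [trimmedMoment, resCDF, Measure.map_apply measurable_design
    (measurableSet_linRes_sq_le β _)]
  exact hq ▸ rfl

lemma Opop_eq_toReal_lintegral (μ : Measure ((Fin q → ℝ) × ℝ)) (a : ℝ) (β : Fin (q + 1) → ℝ) :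
    Opop μ a β
      = (∫⁻ z, ENNReal.ofReal (if resP z β ^ 2 ≤ qLTS μ β a then resP z β ^ 2 else 0) ∂μ).toReal :=
  integral_eq_lintegral_of_nonneg_ae (ae_of_all _ fun z => by dsimp only; split_ifs <;> positivity)
    ((measurable_resP_sq β).ite (measurableSet_le (measurable_resP_sq β) measurable_const)
      measurable_const).aestronglyMeasurable

theorem exists_forall_Opop_le (μ : Measure ((Fin q → ℝ) × ℝ)) [IsProbabilityMeasure μ]
    {a : ℝ} (ha0 : 0 < a) (ha1 : a < 1)
    (hatom : ∀ β, μ {z | resP z β ^ 2 = qLTS μ β a} = 0) :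
    ∃ βl, ∀ β, Opop μ a βl ≤ Opop μ a β := by
  obtain ⟨γ, hγ⟩ := exists_forall_trimmedMoment_le (μ.map design) (ENNReal.ofReal a)
  have hOpop (β) : Opop μ a β = (trimmedMoment (μ.map design) (ENNReal.ofReal a) β).toReal := by
    rw [trimmedMoment_map_design μ ha0 ha1 (hatom β), Opop_eq_toReal_lintegral]
  refine ⟨γ, fun β => ?_⟩
  rw [hOpop, hOpop]
  refine ENNReal.toReal_mono ?_ (hγ β)
  rw [trimmedMoment_map_design μ ha0 ha1 (hatom β)]
  exact lintegral_ofReal_ite_le_ne_top μ _ _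

end Objective

lemma HasPositiveDensity.measure_singleton {ν : Measure ℝ} (h : HasPositiveDensity ν) (t : ℝ) :
    ν {t} = 0 := by
  obtain ⟨f, rfl, -⟩ := h
  rw [withDensity_apply _ (measurableSet_singleton t)]
  exact setLIntegral_measure_zero _ _ (Real.volume_singleton)

lemma isProbabilityMeasure_contam {q : ℕ} (μ : Measure ((Fin q → ℝ) × ℝ))
    [IsProbabilityMeasure μ] {ε : ℝ} (h0 : 0 ≤ ε) (h1 : ε ≤ 1) (z : (Fin q → ℝ) × ℝ) :
    IsProbabilityMeasure (contam μ ε z) :=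
  ⟨by simp [contam, ← ENNReal.ofReal_add (sub_nonneg.2 h1) h0]⟩

theorem stmt_10_general {q : ℕ} (μ : Measure ((Fin q → ℝ) × ℝ)) [IsProbabilityMeasure μ]
    (a c : ℝ) (hc : 1 / 2 < c ∧ c < 1) (ha : a ∈ Set.Icc (1 / 2) c)
    (ε : ℝ) (hε : ε ∈ Set.Ioo (0 : ℝ) (1 / 2)) (z : (Fin q → ℝ) × ℝ)
    (hdens : ∀ β : Fin (q + 1) → ℝ, HasPositiveDensity (μ.map fun z' => (resP z' β) ^ 2))
    (htie : ∀ β : Fin (q + 1) → ℝ,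
      contam μ ε z {u | (resP u β) ^ 2 = qLTS (contam μ ε z) β a} = 0) :
    (∃ βl : Fin (q + 1) → ℝ, ∀ β, Opop μ a βl ≤ Opop μ a β) ∧
    (∃ βl : Fin (q + 1) → ℝ, ∀ β, Opop (contam μ ε z) a βl ≤ Opop (contam μ ε z) a β) := by
  have ha0 : 0 < a := by linarith [ha.1]
  have ha1 : a < 1 := ha.2.trans_lt hc.2
  have := isProbabilityMeasure_contam μ hε.1.le (by linarith [hε.2]) z
  exact ⟨exists_forall_Opop_le μ ha0 ha1 fun β =>
      (measure_resP_sq_eq μ β _).trans ((hdens β).measure_singleton _),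
    exists_forall_Opop_le _ ha0 ha1 htie⟩

/-- Theorem 2.3 (i): existence of the LTS minimizers `β_lts(F, α)` and
`β_lts(F_ε(z), α)` under positive density of `W(β)`, continuity in `β` of the contaminated
quantile `q_ε(z, β, α)`, and no point mass at the quantile. -/
theorem stmt_10 {q : ℕ} (μ : Measure ((Fin q → ℝ) × ℝ)) [IsProbabilityMeasure μ]
    (a c : ℝ) (hc : 1 / 2 < c ∧ c < 1) (ha : a ∈ Set.Icc (1 / 2) c)
    (ε : ℝ) (hε : ε ∈ Set.Ioo (0 : ℝ) (1 / 2)) (z : (Fin q → ℝ) × ℝ)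
    (hdens : ∀ β : Fin (q + 1) → ℝ, HasPositiveDensity (μ.map fun z' => (resP z' β) ^ 2))
    (hqc : Continuous fun β : Fin (q + 1) → ℝ => qLTS (contam μ ε z) β a)
    (htie : ∀ β : Fin (q + 1) → ℝ,
      contam μ ε z {u | (resP u β) ^ 2 = qLTS (contam μ ε z) β a} = 0) :
    (∃ βl : Fin (q + 1) → ℝ, ∀ β, Opop μ a βl ≤ Opop μ a β) ∧
    (∃ βl : Fin (q + 1) → ℝ, ∀ β, Opop (contam μ ε z) a βl ≤ Opop (contam μ ε z) a β) :=
  stmt_10_general μ a c hc ha ε hε z hdens htie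
end
end

section
/- Assume (x', y) follows a unimodal spherical elliptical distribution E(g; 0, I_{p×p}) whose covariance matrix is I_{p×p}, the model y = w'β_0 + e holds with e ~ N(0, σ²) independent of x, and β_lts = β_0 = 0. Then (1) P∇ = 0 and P(∇∇') = 8σ²C · I_{p×p}, where C = Φ(c) - 1/2 - c e^{-c²/2}/√(2π), c = sqrt(F^{-1}_{χ²(1)}(α)), and Φ is the standard normal CDF; and (2) V = 2C₁ · I_{p×p} with C₁ = 2Φ(c) - 1. -/
open MeasureTheory Metric
open scoped ENNReal NNReal Classical

noncomputable section

/-- The standard normal CDF `Φ`. -/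
def stdNormCDF (t : ℝ) : ℝ :=
  ((ProbabilityTheory.gaussianReal 0 1) (Set.Iic t)).toReal

/-- The χ²(1) distribution: the law of `Z²` for `Z ~ N(0,1)`. -/
def chiSq1 : Measure ℝ :=
  (ProbabilityTheory.gaussianReal 0 1).map fun t => t ^ 2

/-- `c = √(F⁻¹_{χ²(1)}(α))`. -/
def cCut (a : ℝ) : ℝ := Real.sqrt (quant chiSq1 a)

/-- `C = Φ(c) - 1/2 - c e^{-c²/2} / √(2π)`. -/
def Cconst (a : ℝ) : ℝ :=
  stdNormCDF (cCut a) - 1 / 2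
    - cCut a * Real.exp (-(cCut a) ^ 2 / 2) / Real.sqrt (2 * Real.pi)

/-- `C₁ = 2Φ(c) - 1`. -/
def C1const (a : ℝ) : ℝ := 2 * stdNormCDF (cCut a) - 1

/-- `(x', y)` follows a unimodal spherical elliptical distribution `E(g; 0, I)`:
its density w.r.t. Lebesgue measure is a nonincreasing function `g` of `‖(x', y)‖²`. -/
def IsUnimodalSpherical {q : ℕ} (μ : Measure ((Fin q → ℝ) × ℝ)) : Prop :=
  ∃ g : ℝ → ℝ, AntitoneOn g (Set.Ici 0) ∧
    μ = (volume : Measure ((Fin q → ℝ) × ℝ)).withDensity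
      (fun z => ENNReal.ofReal (g ((∑ j, (z.1 j) ^ 2) + z.2 ^ 2)))

/-- The covariance matrix of `(x', y)` is the identity (with zero means). -/
def IdCov {q : ℕ} (μ : Measure ((Fin q → ℝ) × ℝ)) : Prop :=
  (∀ i, ∫ z, z.1 i ∂μ = 0) ∧ (∫ z, z.2 ∂μ = 0) ∧
    (∀ i j, ∫ z, z.1 i * z.1 j ∂μ = if i = j then (1 : ℝ) else 0) ∧
    (∀ i, ∫ z, z.1 i * z.2 ∂μ = 0) ∧ (∫ z, z.2 ^ 2 ∂μ = 1)

/-!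
Under the model, `r(0) = y ~ N(0, σ²)` is independent of `x`, and the identity covariance forces
`σ² = E y² = 1`. Hence `r(0)²` is `χ²(1)`-distributed, its `α`-quantile is `c²`, and every
integrand is `1(|y| ≤ c)` times a product of a function of `x` and a function of `y`. By Fubini
each entry factors into a second moment of `w` (an entry of the identity) and a truncated normal
moment `∫_{-c}^{c} yᵏ φ(y) dy`, which `φ'(y) = -y φ(y)` evaluates: `0` for `k = 1`,
`2Φ(c) - 1` for `k = 0`, and `2Φ(c) - 1 - 2cφ(c)` for `k = 2`.
-/

open Real Set ProbabilityTheory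

local notation "φ" => gaussianPDFReal 0 1

lemma gaussianPDFReal_zero_one (x : ℝ) : φ x = (√(2 * π))⁻¹ * exp (-x ^ 2 / 2) := by
  simp [gaussianPDFReal]

lemma gaussianPDFReal_zero_one_neg (x : ℝ) : φ (-x) = φ x := by
  simp [gaussianPDFReal_zero_one]

lemma continuous_gaussianPDFReal_zero_one : Continuous φ := by
  simp_rw [funext gaussianPDFReal_zero_one]
  fun_prop

lemma hasDerivAt_gaussianPDFReal_zero_one (x : ℝ) : HasDerivAt φ (-x * φ x) x := by
  simp_rw [funext gaussianPDFReal_zero_one]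
  have h : HasDerivAt (fun y : ℝ => -y ^ 2 / 2) (-x) x :=
    ((hasDerivAt_pow 2 x).neg.div_const 2).congr_deriv (by ring)
  exact (((hasDerivAt_exp _).comp x h).const_mul (√(2 * π))⁻¹).congr_deriv (by ring)

lemma stdNormCDF_eq_integral (t : ℝ) : stdNormCDF t = ∫ x in Iic t, φ x := by
  rw [stdNormCDF, gaussianReal_apply_eq_integral 0 one_ne_zero, ENNReal.toReal_ofReal]
  exact setIntegral_nonneg measurableSet_Iic fun x _ => gaussianPDFReal_nonneg 0 1 x

lemma stdNormCDF_neg (t : ℝ) : stdNormCDF (-t) = 1 - stdNormCDF t := by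
  have hint := integrable_gaussianPDFReal 0 1
  have hsymm : stdNormCDF t = ∫ x in Ioi (-t), φ x := by
    rw [stdNormCDF_eq_integral, ← integral_comp_neg_Iic]
    simp_rw [gaussianPDFReal_zero_one_neg]
  have htotal := intervalIntegral.integral_Iic_add_Ioi (b := -t) hint.integrableOn hint.integrableOn
  rw [integral_gaussianPDFReal_eq_one 0 one_ne_zero] at htotal
  rw [stdNormCDF_eq_integral, hsymm]
  linarith

lemma integral_gaussianPDFReal_zero_one_symm (c : ℝ) :
    ∫ x in -c..c, φ x = 2 * stdNormCDF c - 1 := by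
  have hint := integrable_gaussianPDFReal 0 1
  rw [← intervalIntegral.integral_Iic_sub_Iic hint.integrableOn hint.integrableOn,
    ← stdNormCDF_eq_integral, ← stdNormCDF_eq_integral, stdNormCDF_neg]
  ring

lemma integral_gaussianPDFReal_zero_one_mul_self_symm (c : ℝ) :
    ∫ x in -c..c, φ x * x = 0 := by
  have hderiv (x : ℝ) : HasDerivAt (fun y => -φ y) (φ x * x) x :=
    (hasDerivAt_gaussianPDFReal_zero_one x).neg.congr_deriv (by ring)
  rw [intervalIntegral.integral_eq_sub_of_hasDerivAt (fun x _ => hderiv x)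
    ((continuous_gaussianPDFReal_zero_one.mul continuous_id).intervalIntegrable _ _),
    gaussianPDFReal_zero_one_neg, sub_self]

lemma integral_gaussianPDFReal_zero_one_mul_sq_symm (c : ℝ) :
    ∫ x in -c..c, φ x * x ^ 2 = 2 * stdNormCDF c - 1 - 2 * c * φ c := by
  have hderiv (x : ℝ) : HasDerivAt (fun y => -(y * φ y)) (φ x * x ^ 2 - φ x) x :=
    ((hasDerivAt_id' x).mul (hasDerivAt_gaussianPDFReal_zero_one x)).neg.congr_deriv (by ring)
  have hcont := continuous_gaussianPDFReal_zero_one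
  have hparts := intervalIntegral.integral_eq_sub_of_hasDerivAt (fun x _ => hderiv x)
    (((hcont.mul (continuous_pow 2)).sub hcont).intervalIntegrable (-c) c)
  rw [intervalIntegral.integral_sub (f := fun x => φ x * x ^ 2) (g := φ)
    ((hcont.mul (continuous_pow 2)).intervalIntegrable _ _) (hcont.intervalIntegrable _ _),
    integral_gaussianPDFReal_zero_one_symm, gaussianPDFReal_zero_one_neg] at hparts
  linarith

lemma integral_gaussianReal_ite_sq_le {c : ℝ} (hc : 0 ≤ c) (G : ℝ → ℝ) :
    ∫ y, (if y ^ 2 ≤ c ^ 2 then G y else 0) ∂gaussianReal 0 1 =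
      ∫ x in -c..c, φ x * G x := by
  have hind (x : ℝ) : φ x * (if x ^ 2 ≤ c ^ 2 then G x else 0)
      = (Icc (-c) c).indicator (fun x => φ x * G x) x := by
    have hmem : x ^ 2 ≤ c ^ 2 ↔ x ∈ Icc (-c) c := by
      rw [mem_Icc, ← abs_le, ← sq_le_sq₀ (abs_nonneg x) hc, sq_abs]
    simp only [hmem, indicator_apply, mul_ite, mul_zero]
  simp_rw [integral_gaussianReal_eq_integral_smul one_ne_zero, smul_eq_mul, hind,
    integral_indicator measurableSet_Icc, integral_Icc_eq_integral_Ioc,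
    intervalIntegral.integral_of_le (neg_le_self hc)]

lemma integral_sq_gaussianReal (m : ℝ) (v : ℝ≥0) :
    ∫ x, x ^ 2 ∂gaussianReal m v = m ^ 2 + v := by
  have h := variance_eq_sub (memLp_id_gaussianReal (μ := m) (v := v) 2)
  simp only [id_eq, Pi.pow_apply, integral_id_gaussianReal, variance_id_gaussianReal] at h
  linarith

lemma quant_nonneg {ν : Measure ℝ} (hν : ν (Iio 0) = 0) {a : ℝ} (ha : 0 < a) :
    0 ≤ quant ν a := by
  refine Real.sInf_nonneg fun t (ht : a ≤ (ν (Iic t)).toReal) => ?_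
  by_contra! htneg
  have hnull : ν (Iic t) = 0 := measure_mono_null (Iic_subset_Iio.mpr htneg) hν
  rw [hnull, ENNReal.toReal_zero] at ht
  linarith

lemma chiSq1_Iio_zero : chiSq1 (Iio 0) = 0 := by
  rw [chiSq1, Measure.map_apply (by fun_prop) measurableSet_Iio]
  convert measure_empty (μ := gaussianReal 0 1)
  ext x
  simp [sq_nonneg]

lemma measurable_wcons {q : ℕ} (j : Fin (q + 1)) :
    Measurable fun x : Fin q → ℝ => wcons x j := by
  cases j using Fin.cases with
  | zero => simp [wcons]
  | succ i => simpa [wcons] using measurable_pi_apply i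

@[simp]
lemma resP_zero {q : ℕ} (z : (Fin q → ℝ) × ℝ) : resP z 0 = z.2 := by
  simp [resP]

section Model

variable {X Y : Type*} [MeasurableSpace X] [MeasurableSpace Y]

lemma map_snd_of_eq_prod {μ : Measure (X × Y)} [IsProbabilityMeasure μ] {κ : Measure Y}
    [SFinite κ] (hμ : μ = (μ.map Prod.fst).prod κ) : μ.map Prod.snd = κ := by
  have : IsProbabilityMeasure (μ.map Prod.fst) :=
    Measure.isProbabilityMeasure_map measurable_fst.aemeasurable
  conv_lhs => rw [hμ]
  simp

lemma integral_eq_mul_of_eq_prod_gaussianReal {μ : Measure (X × ℝ)} {ν : Measure X} [SFinite ν]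
    (hμ : μ = ν.prod (gaussianReal 0 1)) {c : ℝ} (hc : 0 ≤ c) (F : X → ℝ) (G : ℝ → ℝ)
    {H : X × ℝ → ℝ} (hH : ∀ z, H z = if z.2 ^ 2 ≤ c ^ 2 then F z.1 * G z.2 else 0) :
    ∫ z, H z ∂μ = (∫ x, F x ∂ν) * ∫ t in -c..c, φ t * G t := by
  have hH' (z : X × ℝ) : H z = F z.1 * (if z.2 ^ 2 ≤ c ^ 2 then G z.2 else 0) := by
    rw [hH, mul_ite, mul_zero]
  rw [hμ, integral_congr_ae (ae_of_all _ hH'),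
    integral_prod_mul F (fun y => if y ^ 2 ≤ c ^ 2 then G y else 0),
    integral_gaussianReal_ite_sq_le hc]

end Model

section LTS

variable {q : ℕ} {μ : Measure ((Fin q → ℝ) × ℝ)} [IsProbabilityMeasure μ]

lemma eq_one_of_eq_prod_gaussianReal_of_idCov {σ2 : ℝ≥0}
    (hmodel : μ = (μ.map Prod.fst).prod (gaussianReal 0 σ2)) (hcov : IdCov μ) : σ2 = 1 := by
  have h : ∫ y, y ^ 2 ∂(μ.map Prod.snd) = ∫ z, z.2 ^ 2 ∂μ :=
    integral_map measurable_snd.aemeasurable (by fun_prop)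
  rw [map_snd_of_eq_prod hmodel, integral_sq_gaussianReal, hcov.2.2.2.2] at h
  simpa using h

lemma qLTS_zero_of_eq_prod_gaussianReal (hmodel : μ = (μ.map Prod.fst).prod (gaussianReal 0 1))
    {a : ℝ} (ha : 0 < a) : qLTS μ 0 a = cCut a ^ 2 := by
  have hlaw : μ.map (fun z => resP z 0 ^ 2) = chiSq1 := by
    simp_rw [resP_zero]
    change μ.map ((fun t : ℝ => t ^ 2) ∘ Prod.snd) = chiSq1
    rw [← Measure.map_map (by fun_prop) measurable_snd, map_snd_of_eq_prod hmodel, chiSq1]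
  rw [qLTS, hlaw, cCut, sq_sqrt (quant_nonneg chiSq1_Iio_zero ha)]

lemma integral_wcons_mul_wcons (hcov : IdCov μ) (j j' : Fin (q + 1)) :
    ∫ x, wcons x j * wcons x j' ∂(μ.map Prod.fst) = if j = j' then 1 else 0 := by
  rw [integral_map (f := fun x => wcons x j * wcons x j') measurable_fst.aemeasurable
    ((measurable_wcons j).mul (measurable_wcons j')).aestronglyMeasurable]
  obtain ⟨hmean, -, hcross, -, -⟩ := hcov
  cases j using Fin.cases <;> cases j' using Fin.cases <;>
    simp [wcons, hmean, hcross, Fin.succ_ne_zero, (Fin.succ_ne_zero _).symm]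

end LTS

theorem stmt_18_general {q : ℕ} (μ : Measure ((Fin q → ℝ) × ℝ)) [IsProbabilityMeasure μ]
    (a cstar : ℝ) (ha : a ∈ Set.Icc (1 / 2) cstar)
    (hcov : IdCov μ)
    (σ2 : ℝ≥0)
    -- the model `y = w'β₀ + e` with `β₀ = 0` and `e ~ N(0, σ²)` independent of `x`:
    (hmodel : μ = (μ.map Prod.fst).prod (ProbabilityTheory.gaussianReal 0 σ2)) :
    -- (1) `P∇ = 0` and `P(∇∇') = 8σ²C I`
    (∀ j : Fin (q + 1),
      (∫ z, (if (resP z 0) ^ 2 ≤ qLTS μ 0 a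
        then -2 * resP z 0 * wcons z.1 j else 0) ∂μ) = 0) ∧
    (∀ j j' : Fin (q + 1),
      (∫ z, (if (resP z 0) ^ 2 ≤ qLTS μ 0 a
          then (-2 * resP z 0 * wcons z.1 j) * (-2 * resP z 0 * wcons z.1 j') else 0) ∂μ)
        = 8 * (σ2 : ℝ) * Cconst a * (if j = j' then 1 else 0)) ∧
    -- (2) `V = 2C₁ I`
    (∀ j j' : Fin (q + 1),
      2 * (∫ z, (if (resP z 0) ^ 2 ≤ qLTS μ 0 a
          then wcons z.1 j * wcons z.1 j' else 0) ∂μ)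
        = 2 * C1const a * (if j = j' then 1 else 0)) := by
  obtain rfl := eq_one_of_eq_prod_gaussianReal_of_idCov hmodel hcov
  have hq : qLTS μ 0 a = cCut a ^ 2 :=
    qLTS_zero_of_eq_prod_gaussianReal hmodel (by linarith [ha.1])
  have hc : 0 ≤ cCut a := sqrt_nonneg _
  have hfactor := integral_eq_mul_of_eq_prod_gaussianReal hmodel hc
  refine ⟨fun j => ?_, fun j j' => ?_, fun j j' => ?_⟩
  · rw [hfactor (fun x => -2 * wcons x j) (fun t => t)
      (fun z => by rw [resP_zero, hq]; split_ifs <;> ring),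
      integral_gaussianPDFReal_zero_one_mul_self_symm, mul_zero]
  · rw [hfactor (fun x => 4 * (wcons x j * wcons x j')) (fun t => t ^ 2)
      (fun z => by rw [resP_zero, hq]; split_ifs <;> ring),
      integral_const_mul, integral_wcons_mul_wcons hcov,
      integral_gaussianPDFReal_zero_one_mul_sq_symm, gaussianPDFReal_zero_one, Cconst,
      NNReal.coe_one]
    split_ifs <;> ring
  · rw [hfactor (fun x => wcons x j * wcons x j') (fun _ => 1)
      (fun z => by rw [resP_zero, hq]; split_ifs <;> ring),
      integral_wcons_mul_wcons hcov]
    simp_rw [mul_one, integral_gaussianPDFReal_zero_one_symm, C1const]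
    split_ifs <;> ring

/-- Theorem 4.1 (1)–(2): under a unimodal spherical `E(g; 0, I)` distribution for
`(x', y)` with identity covariance, the model `y = w'β₀ + e`, `e ~ N(0, σ²)` independent
of `x`, and `β_lts = β₀ = 0`: (1) `P∇ = 0` and `P(∇∇') = 8σ²C I`; (2) `V = 2C₁ I`. -/
theorem stmt_18 {q : ℕ} (μ : Measure ((Fin q → ℝ) × ℝ)) [IsProbabilityMeasure μ]
    (a cstar : ℝ) (hc : 1 / 2 < cstar ∧ cstar < 1) (ha : a ∈ Set.Icc (1 / 2) cstar)
    (hsph : IsUnimodalSpherical μ) (hcov : IdCov μ)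
    (σ2 : ℝ≥0) (hσ2 : 0 < σ2)
    -- the model `y = w'β₀ + e` with `β₀ = 0` and `e ~ N(0, σ²)` independent of `x`:
    (hmodel : μ = (μ.map Prod.fst).prod (ProbabilityTheory.gaussianReal 0 σ2))
    -- `β_lts = β₀ = 0`:
    (hβl : ∀ β : Fin (q + 1) → ℝ, Opop μ a 0 ≤ Opop μ a β) :
    -- (1) `P∇ = 0` and `P(∇∇') = 8σ²C I`
    (∀ j : Fin (q + 1),
      (∫ z, (if (resP z 0) ^ 2 ≤ qLTS μ 0 a
        then -2 * resP z 0 * wcons z.1 j else 0) ∂μ) = 0) ∧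
    (∀ j j' : Fin (q + 1),
      (∫ z, (if (resP z 0) ^ 2 ≤ qLTS μ 0 a
          then (-2 * resP z 0 * wcons z.1 j) * (-2 * resP z 0 * wcons z.1 j') else 0) ∂μ)
        = 8 * (σ2 : ℝ) * Cconst a * (if j = j' then 1 else 0)) ∧
    -- (2) `V = 2C₁ I`
    (∀ j j' : Fin (q + 1),
      2 * (∫ z, (if (resP z 0) ^ 2 ≤ qLTS μ 0 a
          then wcons z.1 j * wcons z.1 j' else 0) ∂μ)
        = 2 * C1const a * (if j = j' then 1 else 0)) :=
  stmt_18_general μ a cstar ha hcov σ2 hmodel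
end
end
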